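/- In a two-player win-lose game with infinite past, if (s, r) and (s', r') are equilibria with r and r' in the same segment, then r ∈ W iff r' ∈ W (the same player wins both equilibrium runs). -/

import Mathlib

/-- Stages: non-positive integers. -/
abbrev Stage : Type := {n : ℤ // n ≤ 0}

/-- A run assigns an action to each stage. -/
abbrev Run (A : Type) : Type := Stage → A

/-- A position at stage `n` records the actions at all stages `k < n`. -/
abbrev Position (A : Type) (n : ℤ) : Type := {k : ℤ // k < n} → A

/-- The space of all positions. -/
abbrev Pos (A : Type) : Type := Σ n : Stage, Position A n.1

/-- The position induced by a run `r` at stage `n`. -/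
def restrictRun {A : Type} (r : Run A) (n : Stage) : Position A n.1 :=
  fun k => r ⟨k.1, le_trans k.2.le n.2⟩

/-- A run `r` is consistent with a strategy profile `s` (with owner function `ι`). -/
def ConsistentP {I A : Type} (ι : Pos A → I) (s : I → Pos A → A) (r : Run A) : Prop :=
  ∀ n : Stage, r n = s (ι ⟨n, restrictRun r n⟩) ⟨n, restrictRun r n⟩

/-- `(s, r)` is an equilibrium: `r` is consistent with `s` and, for each stage `n`, the profile
`s` induces a Nash equilibrium in the finite subgame starting at the position of `r` at stage
`n`. The latter is expressed as: for every player `i` and every profile `s'` differing from `s`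
only in player `i`'s strategy, the run that agrees with `r` before stage `n` and follows `s'`
from stage `n` onward gives player `i` at most `u i r`. -/
def Equilibrium {I A : Type} (ι : Pos A → I) (u : I → Run A → ℝ)
    (s : I → Pos A → A) (r : Run A) : Prop :=
  ConsistentP ι s r ∧
  ∀ n : Stage, ∀ i : I, ∀ s' : I → Pos A → A, (∀ j : I, j ≠ i → s' j = s j) →
    ∀ r' : Run A, (∀ k : Stage, k.1 < n.1 → r' k = r k) →
      (∀ m : Stage, n.1 ≤ m.1 →
        r' m = s' (ι ⟨m, restrictRun r' m⟩) ⟨m, restrictRun r' m⟩) →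
      u i r' ≤ u i r

/-- `s` is a strong equilibrium with unique consistent run `r`: `r` is the unique run
consistent with `s`, and for every player `i` and every deviation `s'i` of her strategy, every
run consistent with the deviated profile gives player `i` at most `u i r`. -/
def StrongEquilibrium {I A : Type} [DecidableEq I] (ι : Pos A → I) (u : I → Run A → ℝ)
    (s : I → Pos A → A) (r : Run A) : Prop :=
  ConsistentP ι s r ∧ (∀ r' : Run A, ConsistentP ι s r' → r' = r) ∧
  ∀ (i : I) (s'i : Pos A → A) (r' : Run A),
    ConsistentP ι (Function.update s i s'i) r' → u i r' ≤ u i r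

/-- The owner function of a two-player win-lose game: player `0` (player 1) is active at even
stages, player `1` (player 2) at odd stages. -/
def iotaWL {A : Type} : Pos A → Fin 2 := fun q => if Even q.1.1 then 0 else 1

/- Win-lose payoffs: player 1 gets the indicator of the winning set `W`, player 2 that of its
complement. -/
open Classical in
noncomputable def uWL {A : Type} (W : Set (Run A)) : Fin 2 → Run A → ℝ :=
  fun i r => if i = 0 then (if r ∈ W then 1 else 0) else (if r ∈ W then 0 else 1)

/-! If `r ∈ W` and the two runs share their position at stage `n`, let player 1 follow `s` and
player 2 follow `s'` from stage `n` onward, starting from that common position. For the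
equilibrium `(s, r)` this is a deviation of player 2, who therefore cannot win: the resulting run
lies in `W`. For `(s', r')` it is a deviation of player 1, who therefore cannot gain on `r'`: so
`r' ∈ W` as well. -/

section Play

variable {A : Type}

def followFrom (n : Stage) (r : Run A) (τ : Pos A → A) (m : Stage) : A :=
  if m.1 < n.1 then r m
  else τ ⟨m, fun k => followFrom n r τ ⟨k.1, k.2.le.trans m.2⟩⟩
termination_by (m.1 - n.1 + 1).toNat -- the `+ 1` puts every stage before `n` below `n`
decreasing_by have := k.2; omega

lemma followFrom_of_lt {n : Stage} (r : Run A) (τ : Pos A → A) {m : Stage} (hm : m.1 < n.1) :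
    followFrom n r τ m = r m := by
  rw [followFrom, if_pos hm]

lemma followFrom_of_le {n : Stage} (r : Run A) (τ : Pos A → A) {m : Stage} (hm : n.1 ≤ m.1) :
    followFrom n r τ m = τ ⟨m, restrictRun (followFrom n r τ) m⟩ := by
  rw [followFrom, if_neg (not_lt.mpr hm)]
  rfl

lemma Equilibrium.payoff_followFrom_le {I : Type} {ι : Pos A → I} {u : I → Run A → ℝ}
    {s : I → Pos A → A} {r : Run A} (h : Equilibrium ι u s r) {n : Stage} {r₀ : Run A}
    (hr₀ : ∀ k : Stage, k.1 < n.1 → r₀ k = r k) {i : I} {t : I → Pos A → A}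
    (ht : ∀ j, j ≠ i → t j = s j) :
    u i (followFrom n r₀ fun p => t (ι p) p) ≤ u i r :=
  h.2 n i t ht _ (fun k hk => (followFrom_of_lt r₀ _ hk).trans (hr₀ k hk))
    (fun _ hm => followFrom_of_le r₀ _ hm)

end Play

section WinLose

variable {A : Type} {W : Set (Run A)} {x y : Run A}

lemma uWL_zero_le_iff : uWL W 0 x ≤ uWL W 0 y ↔ (x ∈ W → y ∈ W) := by
  by_cases hx : x ∈ W <;> by_cases hy : y ∈ W <;> simp [uWL, hx, hy]

lemma uWL_one_le_iff : uWL W 1 x ≤ uWL W 1 y ↔ (y ∈ W → x ∈ W) := by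
  by_cases hx : x ∈ W <;> by_cases hy : y ∈ W <;> simp [uWL, hx, hy]

lemma mem_of_equilibrium_of_mem {ι : Pos A → Fin 2} {s s' : Fin 2 → Pos A → A} {r r' : Run A}
    (h : Equilibrium ι (uWL W) s r) (h' : Equilibrium ι (uWL W) s' r') {n : Stage}
    (hseg : ∀ k : Stage, k.1 < n.1 → r k = r' k) (hr : r ∈ W) : r' ∈ W := by
  let mixed : Fin 2 → Pos A → A := ![s 0, s' 1]
  have hloser : uWL W 1 (followFrom n r fun p => mixed (ι p) p) ≤ uWL W 1 r :=
    h.payoff_followFrom_le (fun _ _ => rfl) fun j hj => by fin_cases j <;> simp_all [mixed]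
  have hwinner : uWL W 0 (followFrom n r fun p => mixed (ι p) p) ≤ uWL W 0 r' :=
    h'.payoff_followFrom_le hseg fun j hj => by fin_cases j <;> simp_all [mixed]
  exact uWL_zero_le_iff.mp hwinner (uWL_one_le_iff.mp hloser hr)

end WinLose

theorem same_winner_in_segment_general (A : Type) (W : Set (Run A))
    (s s' : Fin 2 → Pos A → A) (r r' : Run A)
    (h : Equilibrium iotaWL (uWL W) s r) (h' : Equilibrium iotaWL (uWL W) s' r')
    (hseg : ∃ n : Stage, ∀ k : Stage, k.1 < n.1 → r k = r' k) :
    r ∈ W ↔ r' ∈ W := by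
  obtain ⟨n, hn⟩ := hseg
  exact ⟨mem_of_equilibrium_of_mem h h' hn,
    mem_of_equilibrium_of_mem h' h fun k hk => (hn k hk).symm⟩

/-- in a two-player win-lose game with infinite past, two equilibria whose runs
lie in the same segment are won by the same player. -/
theorem same_winner_in_segment (A : Type) [Fintype A] [Nonempty A] (W : Set (Run A))
    (s s' : Fin 2 → Pos A → A) (r r' : Run A)
    (h : Equilibrium iotaWL (uWL W) s r) (h' : Equilibrium iotaWL (uWL W) s' r')
    (hseg : ∃ n : Stage, ∀ k : Stage, k.1 < n.1 → r k = r' k) :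
    r ∈ W ↔ r' ∈ W :=
  same_winner_in_segment_general A W s s' r r' h h' hseg
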